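/- Approximate differential privacy of the Gaussian mechanism. Let n be a positive integer, ρ > 0, and let μ₁, μ₂ ∈ ℝ satisfy |μ₁ − μ₂| ≤ 1/n. Set v = 1/(2n²ρ) and, for δ ∈ (0,1), set ε = ρ + 2√(ρ · log(1/δ)). Then for every Borel set S ⊆ ℝ, N(μ₁, v)(S) ≤ e^ε · N(μ₂, v)(S) + δ, where N(μ, v) denotes the Gaussian probability measure on ℝ with mean μ and variance v. -/

import Mathlib

open MeasureTheory Real

/-- The Gaussian probability measure on `ℝ` with mean `μ` and variance `v`, given by
its Lebesgue density `x ↦ (2πv)^{-1/2} exp(−(x−μ)²/(2v))`. -/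
noncomputable def gaussMeasure (μ v : ℝ) : Measure ℝ :=
  volume.withDensity fun x =>
    ENNReal.ofReal ((Real.sqrt (2 * π * v))⁻¹ * Real.exp (-(x - μ) ^ 2 / (2 * v)))

/-! The privacy loss of `N(μ₁, v)` against `N(μ₂, v)` at `x` is
`((x - μ₂)² - (x - μ₁)²) / (2v) = (2d(x - μ₁) + d²) / (2v)` with `d = μ₁ - μ₂`, so the density of
`N(μ₁, v)` is at most `e^ε` times that of `N(μ₂, v)` off the half-line `{x | t ≤ d(x - μ₁)}`,
`t = vε - d²/2 ≥ 2v√(ρ log(1/δ))`. Under `N(μ₁, v)` the variable `d(x - μ₁)` is sub-Gaussian with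
variance proxy `d²v ≤ 2ρv²`, so the Chernoff bound gives that half-line mass at most
`exp(-t²/(4ρv²)) ≤ δ`. -/

open ProbabilityTheory
open scoped NNReal ENNReal

namespace MeasureTheory

theorem withDensity_le_mul_withDensity_add {α : Type*} [MeasurableSpace α] {ν : Measure α}
    [SFinite ν] {f g : α → ℝ≥0∞} (hg : Measurable g) {c : ℝ≥0∞} {A : Set α}
    (hfg : ∀ x ∈ A, f x ≤ c * g x) (S : Set α) :
    ν.withDensity f S ≤ c * ν.withDensity g S + ν.withDensity f Aᶜ := by
  have h_good : ν.withDensity f (S ∩ A) ≤ c * ν.withDensity g S :=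
    calc ν.withDensity f (S ∩ A) = ∫⁻ x in S ∩ A, f x ∂ν := withDensity_apply' _ _
      _ ≤ ∫⁻ x in S ∩ A, c * g x ∂ν := setLIntegral_mono (hg.const_mul c) fun x hx => hfg x hx.2
      _ = c * ν.withDensity g (S ∩ A) := by rw [lintegral_const_mul c hg, withDensity_apply']
      _ ≤ c * ν.withDensity g S := by gcongr; exact Set.inter_subset_left
  calc ν.withDensity f S ≤ ν.withDensity f (S ∩ A) + ν.withDensity f (S \ A) :=
        measure_le_inter_add_sdiff _ _ _
    _ ≤ c * ν.withDensity g S + ν.withDensity f Aᶜ := by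
        gcongr
        exact fun x hx => hx.2

end MeasureTheory

namespace ProbabilityTheory

theorem HasSubgaussianMGF.mono {Ω : Type*} [MeasurableSpace Ω] {μ : Measure Ω} {X : Ω → ℝ}
    {c c' : ℝ≥0} (h : HasSubgaussianMGF X c μ) (hc : c ≤ c') : HasSubgaussianMGF X c' μ where
  integrable_exp_mul := h.integrable_exp_mul
  mgf_le t := (h.mgf_le t).trans (by gcongr)

theorem hasSubgaussianMGF_sub_gaussianReal (m : ℝ) (v : ℝ≥0) :
    HasSubgaussianMGF (fun x => x - m) v (gaussianReal m v) := by
  have h_centered : HasSubgaussianMGF id v (gaussianReal 0 v) :=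
    ⟨integrable_exp_mul_gaussianReal, fun t => by simp [mgf_id_gaussianReal]⟩
  rw [← sub_self m, ← gaussianReal_map_sub_const] at h_centered
  exact (HasSubgaussianMGF.id_map_iff (by fun_prop)).1 h_centered

theorem gaussianReal_real_setOf_le_mul_sub_le (m c : ℝ) {v K : ℝ≥0} (hK : c ^ 2 * v ≤ K)
    {t : ℝ} (ht : 0 ≤ t) :
    (gaussianReal m v).real {x | t ≤ c * (x - m)} ≤ exp (-t ^ 2 / (2 * K)) :=
  (((hasSubgaussianMGF_sub_gaussianReal m v).const_mul c).mono
    (NNReal.coe_le_coe.1 hK)).measure_ge_le ht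

theorem gaussianPDFReal_le_exp_mul_gaussianPDFReal {m₁ m₂ x ε : ℝ} {v : ℝ≥0} (hv : v ≠ 0)
    (h : (x - m₂) ^ 2 - (x - m₁) ^ 2 ≤ 2 * v * ε) :
    gaussianPDFReal m₁ v x ≤ exp ε * gaussianPDFReal m₂ v x := by
  rw [gaussianPDFReal, gaussianPDFReal, mul_left_comm, ← exp_add]
  gcongr
  field_simp
  linarith

theorem gaussianReal_setOf_le_mul_sub_le_ofReal {m d ρ δ t : ℝ} {v : ℝ≥0} (hv : v ≠ 0)
    (hρ : 0 < ρ) (hd : d ^ 2 ≤ 2 * v * ρ) (hδ : 0 < δ) (ht : 2 * v * √(ρ * log (1 / δ)) ≤ t) :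
    gaussianReal m v {x | t ≤ d * (x - m)} ≤ ENNReal.ofReal δ := by
  -- the variance proxy `2ρv² ≥ d²v`: unlike `d²v` it stays positive when `d = 0`
  set K : ℝ≥0 := ⟨2 * v ^ 2 * ρ, by positivity⟩
  have hK_def : (K : ℝ) = 2 * v ^ 2 * ρ := rfl
  have hK : d ^ 2 * v ≤ K :=
    calc d ^ 2 * v ≤ 2 * v * ρ * v := by gcongr
      _ = K := by rw [hK_def]; ring
  have h_sq : 2 * K * log (1 / δ) ≤ t ^ 2 :=
    calc 2 * K * log (1 / δ) = 4 * v ^ 2 * (ρ * log (1 / δ)) := by rw [hK_def]; ring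
      _ ≤ 4 * v ^ 2 * √(ρ * log (1 / δ)) ^ 2 := by gcongr; rw [sq_sqrt']; exact le_max_left _ _
      _ = (2 * v * √(ρ * log (1 / δ))) ^ 2 := by ring
      _ ≤ t ^ 2 := by gcongr
  rw [← ofReal_measureReal]
  gcongr
  calc (gaussianReal m v).real {x | t ≤ d * (x - m)} ≤ exp (-t ^ 2 / (2 * K)) :=
        gaussianReal_real_setOf_le_mul_sub_le m d hK (le_trans (by positivity) ht)
    _ ≤ exp (log δ) := by
        gcongr
        rw [div_le_iff₀ (by rw [hK_def]; positivity)]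
        rw [one_div, log_inv] at h_sq
        linarith
    _ = δ := exp_log hδ

theorem gaussianReal_le_exp_mul_add {m₁ m₂ ρ δ : ℝ} {v : ℝ≥0} (hv : v ≠ 0) (hρ : 0 < ρ)
    (hsens : (m₁ - m₂) ^ 2 ≤ 2 * v * ρ) (hδ : 0 < δ) (S : Set ℝ) :
    gaussianReal m₁ v S ≤
      ENNReal.ofReal (exp (ρ + 2 * √(ρ * log (1 / δ)))) * gaussianReal m₂ v S +
        ENNReal.ofReal δ := by
  set d := m₁ - m₂
  set ε := ρ + 2 * √(ρ * log (1 / δ))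
  set t := v * ε - d ^ 2 / 2
  have h_good : ∀ x ∈ {x | d * (x - m₁) < t},
      gaussianPDF m₁ v x ≤ ENNReal.ofReal (exp ε) * gaussianPDF m₂ v x := by
    intro x (hx : d * (x - m₁) < t)
    have h_loss : (x - m₂) ^ 2 - (x - m₁) ^ 2 = 2 * d * (x - m₁) + d ^ 2 := by ring
    rw [gaussianPDF, gaussianPDF, ← ENNReal.ofReal_mul (exp_nonneg _)]
    exact ENNReal.ofReal_le_ofReal <|
      gaussianPDFReal_le_exp_mul_gaussianPDFReal hv (by simp only [t] at hx; linarith)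
  have h_compl : {x | d * (x - m₁) < t}ᶜ = {x | t ≤ d * (x - m₁)} := by ext; simp
  calc gaussianReal m₁ v S
      ≤ ENNReal.ofReal (exp ε) * gaussianReal m₂ v S +
          gaussianReal m₁ v {x | t ≤ d * (x - m₁)} := by
        rw [← h_compl]
        simpa only [gaussianReal_of_var_ne_zero _ hv] using
          withDensity_le_mul_withDensity_add (measurable_gaussianPDF m₂ v) h_good S
    _ ≤ _ := by
        gcongr
        refine gaussianReal_setOf_le_mul_sub_le_ofReal hv hρ hsens hδ ?_
        simp only [t, ε]
        linarith

end ProbabilityTheory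

theorem gaussMeasure_eq_gaussianReal (m : ℝ) {v : ℝ} (hv : 0 < v) :
    gaussMeasure m v = gaussianReal m v.toNNReal := by
  rw [gaussianReal_of_var_ne_zero _ (by simpa using hv)]
  simp only [gaussMeasure, gaussianPDF_def, gaussianPDFReal_def, Real.coe_toNNReal _ hv.le]

/-- Approximate differential privacy of the Gaussian mechanism: if `|μ₁ − μ₂| ≤ 1/n`,
`v = 1/(2n²ρ)` and `ε = ρ + 2√(ρ log(1/δ))`, then for every Borel set `S`,
`N(μ₁,v)(S) ≤ e^ε N(μ₂,v)(S) + δ`. -/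
theorem gaussian_mechanism_approxDP (n : ℕ) (hn : 0 < n) (ρ : ℝ) (hρ : 0 < ρ)
    (μ₁ μ₂ : ℝ) (hsens : |μ₁ - μ₂| ≤ 1 / n)
    (v δ ε : ℝ) (hv : v = 1 / (2 * n ^ 2 * ρ)) (hδ : δ ∈ Set.Ioo (0 : ℝ) 1)
    (hε : ε = ρ + 2 * Real.sqrt (ρ * Real.log (1 / δ))) :
    ∀ S : Set ℝ, MeasurableSet S →
      gaussMeasure μ₁ v S ≤ ENNReal.ofReal (Real.exp ε) * gaussMeasure μ₂ v S +
        ENNReal.ofReal δ := by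
  intro S _
  have hv₀ : 0 < v := by rw [hv]; positivity
  have h_var : (μ₁ - μ₂) ^ 2 ≤ 2 * (v.toNNReal : ℝ) * ρ := by
    calc (μ₁ - μ₂) ^ 2 = |μ₁ - μ₂| ^ 2 := (sq_abs _).symm
      _ ≤ (1 / n) ^ 2 := by gcongr
      _ = 2 * (v.toNNReal : ℝ) * ρ := by rw [Real.coe_toNNReal _ hv₀.le, hv]; field_simp
  rw [gaussMeasure_eq_gaussianReal μ₁ hv₀, gaussMeasure_eq_gaussianReal μ₂ hv₀, hε]
  exact gaussianReal_le_exp_mul_add (by simpa using hv₀) hρ h_var hδ.1 S
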